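/- arXiv:2502.12793 — 2 statements merged into one kernel-verified Lean document; each statement's English description precedes it below -/
import Mathlib

section
/- Let p ∈ ℝ^n and q ∈ ℝ^m be probability vectors with strictly positive entries, let C ∈ ℝ^{n×m} be a cost matrix, and for each ε > 0 let γ_ε denote the unique minimizer over Γ(p, q) of ⟨γ, C⟩_F − ε H(γ), where H(γ) = −Σ_{i,j} γ_{ij}(log γ_{ij} − 1). Then as ε → ∞, γ_ε converges to the trivial coupling p ⊗ q, i.e. (γ_ε)_{ij} → p_i q_j for all i, j. -/
open Filter
open scoped BigOperators

/-- The transportation polytope `Γ(p, q)`: matrices with nonnegative entries, row sums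
`p` and column sums `q`. -/
def transportationPolytope {n m : ℕ} (p : Fin n → ℝ) (q : Fin m → ℝ) :
    Set (Matrix (Fin n) (Fin m) ℝ) :=
  {γ | (∀ i j, 0 ≤ γ i j) ∧ (∀ i, ∑ j, γ i j = p i) ∧ (∀ j, ∑ i, γ i j = q j)}

/-!
For `γ ∈ Γ(p, q)` the cross entropy `∑ γᵢⱼ log (pᵢ qⱼ)` only depends on the marginals, so
`H(p ⊗ q) - H(γ)` is the relative entropy `KL(γ ‖ p ⊗ q)`. Comparing `γ_ε` with `p ⊗ q` in the
minimisation gives `ε · KL(γ_ε ‖ p ⊗ q) ≤ ⟨p ⊗ q - γ_ε, C⟩ ≤ 2 ∑ |Cᵢⱼ|`. Each term of the relative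
entropy dominates a squared Hellinger distance `(√a - √b)²`, which for entries in `[0, 1]` is at
least `(a - b)² / 4`; hence `(γ_ε - p ⊗ q)ᵢⱼ² = O(1 / ε)`.
-/

open Real Finset Matrix

noncomputable section

namespace EntropicTransport

section Matrix

variable {ι κ : Type*} [Fintype ι] [Fintype κ]

def entropy (γ : Matrix ι κ ℝ) : ℝ :=
  -∑ i, ∑ j, γ i j * (log (γ i j) - 1)

def entropicCost (C : Matrix ι κ ℝ) (ε : ℝ) (γ : Matrix ι κ ℝ) : ℝ :=
  ∑ i, ∑ j, γ i j * C i j - ε * entropy γ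

/-- Relative entropy of unnormalised masses; the `- γ + ν` terms make every summand
nonnegative. -/
def relEntropy (γ ν : Matrix ι κ ℝ) : ℝ :=
  ∑ i, ∑ j, (γ i j * (log (γ i j) - log (ν i j)) - γ i j + ν i j)

lemma sqrt_sub_sqrt_sq_le {a b : ℝ} (ha : 0 ≤ a) (hb : 0 < b) :
    (√a - √b) ^ 2 ≤ a * (log a - log b) - a + b := by
  rcases ha.eq_or_lt with rfl | ha
  · simp [sq_sqrt hb.le]
  have hs : 0 < √a := sqrt_pos.2 ha
  have ht : 0 < √b := sqrt_pos.2 hb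
  have hlog : 2 * (1 - √b / √a) ≤ log a - log b := by
    have h := one_sub_inv_le_log_of_pos (div_pos hs ht)
    rw [inv_div, log_div hs.ne' ht.ne', log_sqrt ha.le, log_sqrt hb.le] at h
    linarith
  have hsa : √a ^ 2 = a := sq_sqrt ha.le
  have hsb : √b ^ 2 = b := sq_sqrt hb.le
  have hmul : a * (√b / √a) = √a * √b := by rw [mul_div_left_comm, div_sqrt, mul_comm]
  nlinarith [mul_le_mul_of_nonneg_left hlog ha.le]

lemma sq_sub_le_four_mul_sqrt_sub_sqrt_sq {a b : ℝ} (ha : 0 ≤ a) (ha1 : a ≤ 1) (hb : 0 ≤ b)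
    (hb1 : b ≤ 1) : (a - b) ^ 2 ≤ 4 * (√a - √b) ^ 2 := by
  have hfactor : a - b = (√a - √b) * (√a + √b) := by
    linear_combination sq_sqrt hb - sq_sqrt ha
  have hsum : (√a + √b) ^ 2 ≤ 4 := by
    nlinarith [sqrt_le_one.2 ha1, sqrt_le_one.2 hb1, sqrt_nonneg a, sqrt_nonneg b]
  rw [hfactor, mul_pow]
  nlinarith [sq_nonneg (√a - √b)]

lemma sq_sub_le_four_mul_relEntropy {γ ν : Matrix ι κ ℝ} (hγ0 : ∀ i j, 0 ≤ γ i j)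
    (hγ1 : ∀ i j, γ i j ≤ 1) (hν0 : ∀ i j, 0 < ν i j) (hν1 : ∀ i j, ν i j ≤ 1) (i : ι) (j : κ) :
    (γ i j - ν i j) ^ 2 ≤ 4 * relEntropy γ ν := by
  have hterm : ∀ k l, (√(γ k l) - √(ν k l)) ^ 2
      ≤ γ k l * (log (γ k l) - log (ν k l)) - γ k l + ν k l :=
    fun k l ↦ sqrt_sub_sqrt_sq_le (hγ0 k l) (hν0 k l)
  have hnonneg : ∀ k l, 0 ≤ γ k l * (log (γ k l) - log (ν k l)) - γ k l + ν k l :=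
    fun k l ↦ (sq_nonneg _).trans (hterm k l)
  have hsingle : γ i j * (log (γ i j) - log (ν i j)) - γ i j + ν i j ≤ relEntropy γ ν :=
    (single_le_sum (fun l _ ↦ hnonneg i l) (mem_univ j)).trans
      (single_le_sum (fun k _ ↦ sum_nonneg fun l _ ↦ hnonneg k l) (mem_univ i))
  calc (γ i j - ν i j) ^ 2 ≤ 4 * (√(γ i j) - √(ν i j)) ^ 2 :=
        sq_sub_le_four_mul_sqrt_sub_sqrt_sq (hγ0 i j) (hγ1 i j) (hν0 i j).le (hν1 i j)
    _ ≤ 4 * relEntropy γ ν := by linarith [hterm i j]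

lemma abs_sum_sum_mul_le (γ C : Matrix ι κ ℝ) (h0 : ∀ i j, 0 ≤ γ i j) (h1 : ∀ i j, γ i j ≤ 1) :
    |∑ i, ∑ j, γ i j * C i j| ≤ ∑ i, ∑ j, |C i j| := by
  calc |∑ i, ∑ j, γ i j * C i j| ≤ ∑ i, ∑ j, |γ i j * C i j| :=
        (abs_sum_le_sum_abs _ _).trans (sum_le_sum fun i _ ↦ abs_sum_le_sum_abs _ _)
    _ ≤ ∑ i, ∑ j, |C i j| := by
        refine sum_le_sum fun i _ ↦ sum_le_sum fun j _ ↦ ?_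
        rw [abs_mul, abs_of_nonneg (h0 i j)]
        exact mul_le_of_le_one_left (abs_nonneg _) (h1 i j)

end Matrix

lemma tendsto_of_sq_sub_le_div {f : ℝ → ℝ} {c K : ℝ}
    (h : ∀ᶠ ε in atTop, (f ε - c) ^ 2 ≤ K / ε) : Tendsto f atTop (nhds c) := by
  have hbound : Tendsto (fun ε ↦ √(K / ε)) atTop (nhds 0) := by
    simpa using (tendsto_const_nhds.div_atTop tendsto_id).sqrt
  rw [tendsto_iff_norm_sub_tendsto_zero]
  exact squeeze_zero' (.of_forall fun _ ↦ norm_nonneg _)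
    (h.mono fun _ hε ↦ abs_le_sqrt hε) hbound

section Polytope

variable {n m : ℕ} {p : Fin n → ℝ} {q : Fin m → ℝ} {γ : Matrix (Fin n) (Fin m) ℝ}

lemma le_one_of_mem_transportationPolytope (hp1 : ∑ i, p i = 1)
    (hγ : γ ∈ transportationPolytope p q) (i : Fin n) (j : Fin m) : γ i j ≤ 1 := by
  obtain ⟨h0, hrow, -⟩ := hγ
  calc γ i j ≤ ∑ k, ∑ l, γ k l :=
        (single_le_sum (fun l _ ↦ h0 i l) (mem_univ j)).trans
          (single_le_sum (fun k _ ↦ sum_nonneg fun l _ ↦ h0 k l) (mem_univ i))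
    _ = 1 := by simp only [hrow, hp1]

lemma vecMulVec_mem_transportationPolytope (hp0 : ∀ i, 0 ≤ p i) (hp1 : ∑ i, p i = 1)
    (hq0 : ∀ j, 0 ≤ q j) (hq1 : ∑ j, q j = 1) : vecMulVec p q ∈ transportationPolytope p q :=
  ⟨fun i j ↦ mul_nonneg (hp0 i) (hq0 j),
    fun i ↦ by simp only [vecMulVec_apply, ← mul_sum, hq1, mul_one],
    fun j ↦ by simp only [vecMulVec_apply, ← sum_mul, hp1, one_mul]⟩

lemma sum_sum_mul_log_vecMulVec (hp0 : ∀ i, 0 < p i) (hq0 : ∀ j, 0 < q j)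
    (hγ : γ ∈ transportationPolytope p q) :
    ∑ i, ∑ j, γ i j * log (vecMulVec p q i j)
      = ∑ i, p i * log (p i) + ∑ j, q j * log (q j) := by
  obtain ⟨-, hrow, hcol⟩ := hγ
  simp only [vecMulVec_apply, log_mul (hp0 _).ne' (hq0 _).ne', mul_add, sum_add_distrib]
  rw [sum_comm (f := fun i j ↦ γ i j * log (q j))]
  simp only [← sum_mul, hrow, hcol]

lemma relEntropy_vecMulVec (hp0 : ∀ i, 0 < p i) (hp1 : ∑ i, p i = 1) (hq0 : ∀ j, 0 < q j)
    (hq1 : ∑ j, q j = 1) (hγ : γ ∈ transportationPolytope p q) :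
    relEntropy γ (vecMulVec p q) = entropy (vecMulVec p q) - entropy γ := by
  have hν := vecMulVec_mem_transportationPolytope (fun i ↦ (hp0 i).le) hp1 (fun j ↦ (hq0 j).le) hq1
  have hγ_cross := sum_sum_mul_log_vecMulVec hp0 hq0 hγ
  have hν_cross := sum_sum_mul_log_vecMulVec hp0 hq0 hν
  simp only [relEntropy, entropy, mul_sub, sub_add, sum_sub_distrib, mul_one]
  linarith

lemma mul_relEntropy_vecMulVec_le (hp0 : ∀ i, 0 < p i) (hp1 : ∑ i, p i = 1) (hq0 : ∀ j, 0 < q j)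
    (hq1 : ∑ j, q j = 1) (C : Matrix (Fin n) (Fin m) ℝ) {ε : ℝ}
    (hγ : γ ∈ transportationPolytope p q)
    (hmin : entropicCost C ε γ ≤ entropicCost C ε (vecMulVec p q)) :
    ε * relEntropy γ (vecMulVec p q) ≤ 2 * ∑ i, ∑ j, |C i j| := by
  have hν := vecMulVec_mem_transportationPolytope (fun i ↦ (hp0 i).le) hp1 (fun j ↦ (hq0 j).le) hq1
  have hγC := abs_le.1 <| abs_sum_sum_mul_le γ C hγ.1 (le_one_of_mem_transportationPolytope hp1 hγ)
  have hνC := abs_le.1 <| abs_sum_sum_mul_le _ C hν.1 (le_one_of_mem_transportationPolytope hp1 hν)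
  rw [relEntropy_vecMulVec hp0 hp1 hq0 hq1 hγ]
  unfold entropicCost at hmin
  linarith

end Polytope

end EntropicTransport

end

open EntropicTransport

/-- Let `p ∈ ℝ^n`, `q ∈ ℝ^m` be probability vectors with strictly positive
entries, `C` a cost matrix, and for each `ε > 0` let `γ ε` be the (unique) minimizer over
`Γ(p, q)` of `⟨γ, C⟩_F − ε H(γ)` with `H(γ) = −Σ_{i,j} γ_{ij}(log γ_{ij} − 1)`. Then, as
`ε → ∞`, `γ_ε` converges entrywise to the trivial coupling `p ⊗ q`:
`(γ_ε)_{ij} → p_i q_j`. -/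
theorem entropic_plan_tendsto_product {n m : ℕ}
    (p : Fin n → ℝ) (q : Fin m → ℝ)
    (hp0 : ∀ i, 0 < p i) (hp1 : ∑ i, p i = 1)
    (hq0 : ∀ j, 0 < q j) (hq1 : ∑ j, q j = 1)
    (C : Matrix (Fin n) (Fin m) ℝ)
    (γ : ℝ → Matrix (Fin n) (Fin m) ℝ)
    (hγmem : ∀ ε > 0, γ ε ∈ transportationPolytope p q)
    (hγmin : ∀ ε > 0, ∀ γ' ∈ transportationPolytope p q,
      (∑ i, ∑ j, γ ε i j * C i j)
          - ε * (-(∑ i, ∑ j, γ ε i j * (Real.log (γ ε i j) - 1))) ≤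
        (∑ i, ∑ j, γ' i j * C i j)
          - ε * (-(∑ i, ∑ j, γ' i j * (Real.log (γ' i j) - 1)))) :
    ∀ i j, Tendsto (fun ε => γ ε i j) atTop (nhds (p i * q j)) := by
  intro i j
  have hprod := vecMulVec_mem_transportationPolytope (fun i ↦ (hp0 i).le) hp1
    (fun j ↦ (hq0 j).le) hq1
  refine tendsto_of_sq_sub_le_div (K := 8 * ∑ k, ∑ l, |C k l|) ?_
  filter_upwards [eventually_gt_atTop 0] with ε hε
  have hKL := mul_relEntropy_vecMulVec_le hp0 hp1 hq0 hq1 C (hγmem ε hε) (hγmin ε hε _ hprod)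
  calc (γ ε i j - p i * q j) ^ 2 ≤ 4 * relEntropy (γ ε) (vecMulVec p q) :=
        sq_sub_le_four_mul_relEntropy (hγmem ε hε).1
          (le_one_of_mem_transportationPolytope hp1 (hγmem ε hε))
          (fun k l ↦ mul_pos (hp0 k) (hq0 l)) (le_one_of_mem_transportationPolytope hp1 hprod) i j
    _ ≤ (8 * ∑ k, ∑ l, |C k l|) / ε := (le_div_iff₀ hε).2 (by linarith)
end

section
/- Let p ∈ ℝ^n and q ∈ ℝ^m be probability vectors. Then every extreme point γ of the transportation polytope Γ(p, q) has at most n + m − 1 nonzero entries, i.e. the cardinality of {(i,j) : γ_{ij} ≠ 0} is at most n + m − 1. Consequently, an optimal solution of the linear program min_{γ ∈ Γ(p,q)} ⟨γ, C⟩_F can always be chosen with at most n + m − 1 nonzero entries. -/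
open scoped BigOperators

/-!
Let `γ` be an extreme point of `Γ(p, q)` with support `S`. A nonzero matrix `G` supported in `S`
with zero row and column sums cannot exist: `γ ± tG` would stay in `Γ(p, q)` for small `t`, with
`γ` as their midpoint. So the marginal map `G ↦ (row sums, column sums)` is injective on matrices
supported in `S`, while its image lies in the hyperplane `∑ rows = ∑ columns` of `ℝⁿ × ℝᵐ`; hence
`|S| ≤ n + m - 1`. For the optimal plan, the minimisers of the linear cost on the compact polytope
form an exposed face, and an extreme point of that face (Krein–Milman) is extreme in `Γ(p, q)`.
-/

open Filter Topology

instance Matrix.locallyConvexSpace {𝕜 E ι κ : Type*} [Semiring 𝕜] [PartialOrder 𝕜]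
    [AddCommMonoid E] [TopologicalSpace E] [Module 𝕜 E] [LocallyConvexSpace 𝕜 E] :
    LocallyConvexSpace 𝕜 (Matrix ι κ E) :=
  Pi.locallyConvexSpace

theorem IsCompact.exists_mem_extremePoints_isMinOn {E : Type*} [AddCommGroup E] [Module ℝ E]
    [TopologicalSpace E] [T2Space E] [IsTopologicalAddGroup E] [ContinuousSMul ℝ E]
    [LocallyConvexSpace ℝ E] {s : Set E} (hs : IsCompact s) (hne : s.Nonempty)
    (l : StrongDual ℝ E) : ∃ x ∈ s.extremePoints ℝ, IsMinOn l s x := by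
  have hexp : IsExposed ℝ s ((-l).toExposed s) := ContinuousLinearMap.toExposed.isExposed
  obtain ⟨z, hzs, hz⟩ := hs.exists_isMaxOn hne (-l).continuous.continuousOn
  obtain ⟨x, hx⟩ := (hexp.isCompact hs).extremePoints_nonempty ⟨z, hzs, fun y hy => hz hy⟩
  refine ⟨x, hexp.isExtreme.extremePoints_subset_extremePoints hx, fun y hy => ?_⟩
  simpa using hx.1.2 y hy

theorem eq_zero_of_mem_extremePoints_of_eventually_add_smul_mem {E : Type*} [AddCommGroup E]
    [Module ℝ E] {A : Set E} {x d : E} (hx : x ∈ A.extremePoints ℝ)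
    (hd : ∀ᶠ t in 𝓝 (0 : ℝ), x + t • d ∈ A) : d = 0 := by
  obtain ⟨ε, hε, hball⟩ := Metric.eventually_nhds_iff.1 hd
  have hmem : ∀ t : ℝ, |t| = ε / 2 → x + t • d ∈ A := fun t ht =>
    hball (by rw [Real.dist_eq, sub_zero, ht]; linarith)
  have hseg : x ∈ openSegment ℝ (x + (-(ε / 2)) • d) (x + (ε / 2) • d) :=
    ⟨1 / 2, 1 / 2, by norm_num, by norm_num, by norm_num, by module⟩
  have := hx.2 (hmem _ (by rw [abs_neg, abs_of_pos (by positivity)]))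
    (hmem _ (abs_of_pos (by positivity))) hseg
  simpa [hε.ne'] using this

section Marginals

variable {ι κ : Type*} [Fintype ι] [Fintype κ]

def marginals : Matrix ι κ ℝ →ₗ[ℝ] (ι → ℝ) × (κ → ℝ) where
  toFun G := (fun i => ∑ j, G i j, fun j => ∑ i, G i j)
  map_add' G H := by ext <;> simp [Finset.sum_add_distrib]
  map_smul' c G := by ext <;> simp [Finset.mul_sum]

theorem range_marginals_ne_top [Nonempty ι] :
    LinearMap.range (marginals (ι := ι) (κ := κ)) ≠ ⊤ := by
  classical
  intro h
  obtain ⟨G, hG⟩ : (Pi.single (Classical.arbitrary ι) (1 : ℝ), 0) ∈ LinearMap.range marginals :=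
    h ▸ Submodule.mem_top
  have htotal : ∑ i, (marginals G).1 i = ∑ j, (marginals G).2 j := Finset.sum_comm
  simp [hG] at htotal

theorem ncard_lt_card_add_card_of_marginals_eq_zero [Nonempty ι] (S : Set (ι × κ))
    (hS : ∀ G : Matrix ι κ ℝ, (∀ ij ∉ S, G ij.1 ij.2 = 0) → marginals G = 0 → G = 0) :
    S.ncard < Fintype.card ι + Fintype.card κ := by
  classical
  let E : (S → ℝ) →ₗ[ℝ] Matrix ι κ ℝ :=
    (LinearEquiv.curry ℝ ℝ ι κ).toLinearMap ∘ₗ Function.ExtendByZero.linearMap ℝ Subtype.val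
  have hE_apply : ∀ g (k : S), E g k.1.1 k.1.2 = g k := fun g k =>
    Subtype.val_injective.extend_apply g 0 k
  have hE_supp : ∀ g, ∀ ij ∉ S, E g ij.1 ij.2 = 0 := fun g ij hij =>
    Function.extend_apply' _ _ _ fun ⟨k, hk⟩ => hij (hk ▸ k.2 :)
  have hinj : Function.Injective (marginals ∘ₗ E) := by
    rw [← LinearMap.ker_eq_bot, LinearMap.ker_eq_bot']
    intro g hg
    have hEg := hS (E g) (hE_supp g) hg
    funext k
    rw [← hE_apply g k, hEg]
    rfl
  calc S.ncard = Fintype.card S := (Nat.card_coe_set_eq S).symm.trans Nat.card_eq_fintype_card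
    _ = Module.finrank ℝ (S → ℝ) := (Module.finrank_fintype_fun_eq_card ℝ).symm
    _ = Module.finrank ℝ (LinearMap.range (marginals ∘ₗ E)) :=
      (LinearMap.finrank_range_of_inj hinj).symm
    _ < Module.finrank ℝ ((ι → ℝ) × (κ → ℝ)) :=
      Submodule.finrank_lt (ne_top_of_le_ne_top range_marginals_ne_top
        (LinearMap.range_comp_le_range _ _))
    _ = Fintype.card ι + Fintype.card κ := by simp [Module.finrank_prod]

end Marginals

noncomputable def frobeniusPairing {ι κ : Type*} [Fintype ι] [Fintype κ] (C : Matrix ι κ ℝ) :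
    StrongDual ℝ (Matrix ι κ ℝ) :=
  LinearMap.toContinuousLinearMap
    { toFun γ := ∑ i, ∑ j, γ i j * C i j
      map_add' γ γ' := by simp only [Matrix.add_apply, add_mul, Finset.sum_add_distrib]
      map_smul' c γ := by
        simp only [Matrix.smul_apply, smul_eq_mul, Finset.mul_sum, mul_assoc, RingHom.id_apply] }

section TransportationPolytope

variable {n m : ℕ} {p : Fin n → ℝ} {q : Fin m → ℝ}

theorem eventually_add_smul_mem_transportationPolytope {γ G : Matrix (Fin n) (Fin m) ℝ}
    (hγ : γ ∈ transportationPolytope p q) (hG : ∀ i j, γ i j = 0 → G i j = 0)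
    (hG0 : marginals G = 0) : ∀ᶠ t in 𝓝 (0 : ℝ), γ + t • G ∈ transportationPolytope p q := by
  obtain ⟨hnonneg, hrow, hcol⟩ := hγ
  have hrowG : ∀ i, ∑ j, G i j = 0 := fun i => congrFun (congrArg Prod.fst hG0) i
  have hcolG : ∀ j, ∑ i, G i j = 0 := fun j => congrFun (congrArg Prod.snd hG0) j
  have hentry : ∀ i j, ∀ᶠ t in 𝓝 (0 : ℝ), 0 ≤ γ i j + t * G i j := by
    intro i j
    rcases (hnonneg i j).eq_or_lt with h | h
    · exact .of_forall fun t => by simp [← h, hG i j h.symm]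
    · have hlim : Tendsto (fun t : ℝ => γ i j + t * G i j) (𝓝 0) (𝓝 (γ i j)) := by
        simpa using (show Continuous fun t : ℝ => γ i j + t * G i j by fun_prop).tendsto 0
      exact (hlim.eventually_const_lt h).mono fun t ht => ht.le
  filter_upwards [eventually_all.2 fun i => eventually_all.2 (hentry i)] with t ht
  refine ⟨ht, fun i => ?_, fun j => ?_⟩
  · simp [Finset.sum_add_distrib, ← Finset.mul_sum, hrow, hrowG]
  · simp [Finset.sum_add_distrib, ← Finset.mul_sum, hcol, hcolG]

theorem ncard_support_le_of_mem_extremePoints {γ : Matrix (Fin n) (Fin m) ℝ}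
    (hγ : γ ∈ (transportationPolytope p q).extremePoints ℝ) :
    {ij : Fin n × Fin m | γ ij.1 ij.2 ≠ 0}.ncard ≤ n + m - 1 := by
  rcases isEmpty_or_nonempty (Fin n) with hn | hn
  · simp [Set.eq_empty_of_isEmpty]
  have hlt := ncard_lt_card_add_card_of_marginals_eq_zero {ij : Fin n × Fin m | γ ij.1 ij.2 ≠ 0}
    fun G hG hG0 => eq_zero_of_mem_extremePoints_of_eventually_add_smul_mem hγ
      (eventually_add_smul_mem_transportationPolytope hγ.1 (fun i j h => hG (i, j) (not_not.2 h))
        hG0)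
  simp only [Fintype.card_fin] at hlt
  omega

theorem isClosed_transportationPolytope : IsClosed (transportationPolytope p q) := by
  have hentry : ∀ i j, Continuous fun γ : Matrix (Fin n) (Fin m) ℝ => γ i j := fun i j =>
    continuous_id.matrix_elem i j
  simp only [transportationPolytope, Set.ofPred_and, Set.ofPred_forall]
  exact (isClosed_iInter fun i => isClosed_iInter fun j =>
      isClosed_le continuous_const (hentry i j)).inter
    ((isClosed_iInter fun i => isClosed_eq (continuous_finsetSum _ fun j _ => hentry i j)
        continuous_const).inter
      (isClosed_iInter fun j => isClosed_eq (continuous_finsetSum _ fun i _ => hentry i j)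
        continuous_const))

theorem isCompact_transportationPolytope : IsCompact (transportationPolytope p q) := by
  refine (isCompact_univ_pi fun i => isCompact_univ_pi fun _ => isCompact_Icc (a := 0)
    (b := p i)).of_isClosed_subset isClosed_transportationPolytope ?_
  rintro γ ⟨hnonneg, hrow, -⟩ i - j -
  exact ⟨hnonneg i j, hrow i ▸ Finset.single_le_sum (fun j _ => hnonneg i j) (Finset.mem_univ j)⟩

theorem transportationPolytope_nonempty (hp0 : ∀ i, 0 ≤ p i) (hp1 : ∑ i, p i = 1)
    (hq0 : ∀ j, 0 ≤ q j) (hq1 : ∑ j, q j = 1) : (transportationPolytope p q).Nonempty :=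
  ⟨Matrix.of fun i j => p i * q j, fun i j => mul_nonneg (hp0 i) (hq0 j),
    fun i => by simp [← Finset.mul_sum, hq1], fun j => by simp [← Finset.sum_mul, hp1]⟩

end TransportationPolytope

/-- For probability vectors `p ∈ ℝ^n` and `q ∈ ℝ^m`, every extreme point
of the transportation polytope `Γ(p, q)` has at most `n + m − 1` nonzero entries;
consequently, for any cost matrix `C`, an optimal solution of the linear program
`min_{γ ∈ Γ(p,q)} ⟨γ, C⟩_F` can be chosen with at most `n + m − 1` nonzero entries. -/
theorem extremePoints_sparse_and_sparse_optimal_plan {n m : ℕ}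
    (p : Fin n → ℝ) (q : Fin m → ℝ)
    (hp0 : ∀ i, 0 ≤ p i) (hp1 : ∑ i, p i = 1)
    (hq0 : ∀ j, 0 ≤ q j) (hq1 : ∑ j, q j = 1) :
    (∀ γ ∈ Set.extremePoints ℝ (transportationPolytope p q),
      {ij : Fin n × Fin m | γ ij.1 ij.2 ≠ 0}.ncard ≤ n + m - 1) ∧
    ∀ C : Matrix (Fin n) (Fin m) ℝ,
      ∃ γstar ∈ transportationPolytope p q,
        (∀ γ ∈ transportationPolytope p q,
          (∑ i, ∑ j, γstar i j * C i j) ≤ ∑ i, ∑ j, γ i j * C i j) ∧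
        {ij : Fin n × Fin m | γstar ij.1 ij.2 ≠ 0}.ncard ≤ n + m - 1 := by
  refine ⟨fun γ hγ => ncard_support_le_of_mem_extremePoints hγ, fun C => ?_⟩
  obtain ⟨γ, hγ, hmin⟩ := isCompact_transportationPolytope.exists_mem_extremePoints_isMinOn
    (transportationPolytope_nonempty hp0 hp1 hq0 hq1) (frobeniusPairing C)
  exact ⟨γ, hγ.1, fun γ' hγ' => hmin hγ', ncard_support_le_of_mem_extremePoints hγ⟩
end
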